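/- Let 0 < β₁ < β₂ < β₄ < 2, b > 0, c > 0, with b ρ̃₂ + c ρ̃₁ > 1 and d ≤ −b (b ρ̃₂ + c ρ̃₁)^{β₂/(β₄−β₂)} ρ₂ − c (b ρ̃₂ + c ρ̃₁)^{β₁/(β₄−β₂)} ρ₁, where ρ_i = sin((β₄−β_i)π/2)/sin(β₄π/2) and ρ̃_i = sin(β_iπ/2)/sin(β₄π/2). Define h₁(ω) = ω^{β₄} cos(β₄π/2) − b ω^{β₂} cos(β₂π/2) − c ω^{β₁} cos(β₁π/2) − d and h₂(ω) = ω^{β₄} sin(β₄π/2) − b ω^{β₂} sin(β₂π/2) − c ω^{β₁} sin(β₁π/2). Then for every ω > 0 with h₂(ω) = 0, we have h₁(ω) > 0. -/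

import Mathlib

/-!
On the zero set of `h₂` the term `ω ^ β₄ sin (β₄ π / 2)` can be eliminated from
`h₁ ω sin (β₄ π / 2)`, and the addition formula for `sin` turns what remains into
`h₁ ω = -b ω ^ β₂ ρ₂ - c ω ^ β₁ ρ₁ - d`, with `ρ₁, ρ₂ > 0`. The zero equation also reads
`ω ^ β₄ = b ρ̃₂ ω ^ β₂ + c ρ̃₁ ω ^ β₁`, which forces `ω ^ (β₄ - β₂) < b ρ̃₂ + c ρ̃₁`; raising to
the powers `β_i / (β₄ - β₂)` bounds `ω ^ β_i`, and the hypothesis on `d` makes `h₁ ω` positive.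
-/

open Real

lemma sin_mul_pi_div_two_pos {x : ℝ} (h0 : 0 < x) (h2 : x < 2) : 0 < sin (x * π / 2) :=
  sin_pos_of_pos_of_lt_pi (by positivity) (by nlinarith [pi_pos])

lemma sub_cos_eq_of_mul_sin_eq {θ₁ θ₂ θ₄ X₁ X₂ X₄ b c : ℝ} (hs : sin θ₄ ≠ 0)
    (h : X₄ * sin θ₄ = b * X₂ * sin θ₂ + c * X₁ * sin θ₁) :
    X₄ * cos θ₄ - b * X₂ * cos θ₂ - c * X₁ * cos θ₁ =
      -(b * X₂ * (sin (θ₄ - θ₂) / sin θ₄)) - c * X₁ * (sin (θ₄ - θ₁) / sin θ₄) := by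
  field_simp
  rw [sin_sub, sin_sub]
  linear_combination cos θ₄ * h

lemma rpow_sub_lt_of_rpow_le {ω β₁ β₂ β₄ B C : ℝ} (hω : 0 < ω) (h12 : β₁ < β₂) (h24 : β₂ < β₄)
    (hC : 0 < C) (hBC : 1 < B + C)
    (h : ω ^ β₄ ≤ B * ω ^ β₂ + C * ω ^ β₁) :
    ω ^ (β₄ - β₂) < B + C := by
  rcases le_or_gt ω 1 with hω1 | hω1
  · exact (rpow_le_one hω.le hω1 (by linarith)).trans_lt hBC
  · have hlt : ω ^ β₁ < ω ^ β₂ := rpow_lt_rpow_of_exponent_lt hω1 h12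
    have h₄ : ω ^ β₄ < (B + C) * ω ^ β₂ := by linarith [mul_lt_mul_of_pos_left hlt hC]
    rw [rpow_sub hω]
    exact (div_lt_iff₀ (rpow_pos_of_pos hω _)).mpr h₄

lemma rpow_lt_rpow_div_of_rpow_lt {ω A β δ : ℝ} (hω : 0 ≤ ω) (hβ : 0 < β) (hδ : 0 < δ)
    (h : ω ^ δ < A) : ω ^ β < A ^ (β / δ) := by
  calc ω ^ β = (ω ^ δ) ^ (β / δ) := by rw [← rpow_mul hω, mul_div_cancel₀ _ hδ.ne']
    _ < A ^ (β / δ) := rpow_lt_rpow (rpow_nonneg hω _) h (div_pos hβ hδ)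

theorem stmt_15 (β₁ β₂ β₄ : ℝ) (h1 : 0 < β₁) (h12 : β₁ < β₂) (h24 : β₂ < β₄)
    (h4 : β₄ < 2) (b c d : ℝ) (hb : 0 < b) (hc : 0 < c)
    (ρ₁ ρ₂ ρt₁ ρt₂ : ℝ)
    (hρ₁ : ρ₁ = Real.sin ((β₄ - β₁) * π / 2) / Real.sin (β₄ * π / 2))
    (hρ₂ : ρ₂ = Real.sin ((β₄ - β₂) * π / 2) / Real.sin (β₄ * π / 2))
    (hρt₁ : ρt₁ = Real.sin (β₁ * π / 2) / Real.sin (β₄ * π / 2))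
    (hρt₂ : ρt₂ = Real.sin (β₂ * π / 2) / Real.sin (β₄ * π / 2))
    (hgt : 1 < b * ρt₂ + c * ρt₁)
    (hd : d ≤ - b * (b * ρt₂ + c * ρt₁) ^ (β₂ / (β₄ - β₂)) * ρ₂
            - c * (b * ρt₂ + c * ρt₁) ^ (β₁ / (β₄ - β₂)) * ρ₁)
    (h₁ h₂ : ℝ → ℝ)
    (hh₁ : ∀ ω : ℝ, h₁ ω =
        ω ^ β₄ * Real.cos (β₄ * π / 2) - b * ω ^ β₂ * Real.cos (β₂ * π / 2)
          - c * ω ^ β₁ * Real.cos (β₁ * π / 2) - d)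
    (hh₂ : ∀ ω : ℝ, h₂ ω =
        ω ^ β₄ * Real.sin (β₄ * π / 2) - b * ω ^ β₂ * Real.sin (β₂ * π / 2)
          - c * ω ^ β₁ * Real.sin (β₁ * π / 2)) :
    ∀ ω : ℝ, 0 < ω → h₂ ω = 0 → 0 < h₁ ω := by
  intro ω hω hz
  have hβ₂ : 0 < β₂ := h1.trans h12
  have hs₄ := sin_mul_pi_div_two_pos (hβ₂.trans h24) h4
  have hρ₁pos : 0 < ρ₁ := hρ₁ ▸ div_pos (sin_mul_pi_div_two_pos (by linarith) (by linarith)) hs₄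
  have hρ₂pos : 0 < ρ₂ := hρ₂ ▸ div_pos (sin_mul_pi_div_two_pos (by linarith) (by linarith)) hs₄
  have hρt₁pos : 0 < ρt₁ := hρt₁ ▸ div_pos (sin_mul_pi_div_two_pos h1 (by linarith)) hs₄
  have hzero : ω ^ β₄ * sin (β₄ * π / 2) =
      b * ω ^ β₂ * sin (β₂ * π / 2) + c * ω ^ β₁ * sin (β₁ * π / 2) := by
    linarith [hh₂ ω]
  have hh₁ω : h₁ ω = -(b * ω ^ β₂ * ρ₂) - c * ω ^ β₁ * ρ₁ - d := by
    rw [sub_mul, sub_div] at hρ₁ hρ₂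
    rw [hh₁, sub_cos_eq_of_mul_sin_eq hs₄.ne' hzero, hρ₁, hρ₂]
  have hpow : ω ^ (β₄ - β₂) < b * ρt₂ + c * ρt₁ := by
    refine rpow_sub_lt_of_rpow_le hω h12 h24 (mul_pos hc hρt₁pos) hgt (le_of_eq ?_)
    rw [eq_div_iff hs₄.ne' |>.mpr hzero, hρt₁, hρt₂]
    ring
  have hδ : 0 < β₄ - β₂ := sub_pos.mpr h24
  have hω₂ := rpow_lt_rpow_div_of_rpow_lt hω.le hβ₂ hδ hpow
  have hω₁ := rpow_lt_rpow_div_of_rpow_lt hω.le h1 hδ hpow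
  rw [hh₁ω]
  linarith [mul_lt_mul_of_pos_left hω₂ (mul_pos hb hρ₂pos),
    mul_lt_mul_of_pos_left hω₁ (mul_pos hc hρ₁pos)]
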